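/- arXiv:2004.08958 — 3 statements merged into one kernel-verified Lean document; each statement's English description precedes it below -/
import Mathlib

section
/- The migration-recombination equation μ_{t+1}(α) = ∑_{δ∈S([n])} r_δ ⊗_{d∈δ} ∑_{β∈L} M(α,β) μ_t^d(β) can be rewritten as μ_{t+1} = ∑_{𝛅∈LS([n])} p_𝛅 R_𝛅(μ_t), where the migration-recombination probabilities p_𝛅(α) := r_δ ∏_{(d,λ)∈𝛅} M(α,λ) satisfy ∑_{𝛅∈LS([n])} p_𝛅(α) = 1 for every α ∈ L. -/
open scoped Classical

variable {n : ℕ}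

/-- `P` is a partition of the finite set `U` of sites. -/
def IsPartition (U : Finset (Fin n)) (P : Finset (Finset (Fin n))) : Prop :=
  (∀ b ∈ P, b.Nonempty) ∧ (∀ b ∈ P, ∀ c ∈ P, b ≠ c → Disjoint b c) ∧ P.sup id = U

/-- A labelled partition of `U` (with labels in `L`), encoded as a finite set of
(block, label) pairs whose blocks form a partition of `U`. -/
def IsLabelledPartition {L : Type*} (U : Finset (Fin n)) (D : Finset (Finset (Fin n) × L)) : Prop :=
  IsPartition U (D.image Prod.fst) ∧ ∀ p ∈ D, ∀ q ∈ D, p.1 = q.1 → p = q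

/-- The induced labelled partition `𝛅|_V`. -/
noncomputable def restrictL {L : Type*} (D : Finset (Finset (Fin n) × L)) (V : Finset (Fin n)) :
    Finset (Finset (Fin n) × L) :=
  (D.image fun p => (p.1 ∩ V, p.2)).filter fun p => p.1.Nonempty

/-- The induced (unlabelled) partition `δ|_V`. -/
def restrictP (P : Finset (Finset (Fin n))) (V : Finset (Fin n)) : Finset (Finset (Fin n)) :=
  (P.image fun d => d ∩ V).filter fun d => d.Nonempty

/-- `𝛆` is finer than `𝛅` (the base of `𝛆` refines the base of `𝛅`). -/
def RefinesL {L : Type*} (E D : Finset (Finset (Fin n) × L)) : Prop :=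
  ∀ p ∈ E, ∃ q ∈ D, p.1 ⊆ q.1

/-- `ε` refines `δ` for unlabelled partitions. -/
def RefinesP (Q P : Finset (Finset (Fin n))) : Prop :=
  ∀ e ∈ Q, ∃ d ∈ P, e ⊆ d

/-- Configurations (marginal types) over a subset `U` of sites. -/
abbrev Cfg (A : Fin n → Type*) (U : Finset (Fin n)) : Type _ :=
  ∀ i : U, A i.1

/-- Restriction of a configuration to a smaller index set. -/
def res (A : Fin n → Type*) {U V : Finset (Fin n)} (h : V ⊆ U) (x : Cfg A U) : Cfg A V :=
  fun i => x ⟨i.1, h i.2⟩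

/-- Marginal of a measure (as a function on configurations) with respect to `V ⊆ U`. -/
noncomputable def marg (A : Fin n → Type*) [∀ i, Fintype (A i)]
    {U V : Finset (Fin n)} (h : V ⊆ U) (ν : Cfg A U → ℝ) : Cfg A V → ℝ :=
  fun x => ∑ y : Cfg A U, if res A h y = x then ν y else 0

/-- The labelled recombinator `R^U_𝛅(ν) = ⊗_{(d,λ)∈𝛅} ν^d(λ)`, evaluated pointwise. -/
noncomputable def recomb (A : Fin n → Type*) [∀ i, Fintype (A i)] {L : Type*}
    {U : Finset (Fin n)} (D : Finset (Finset (Fin n) × L)) (ν : L → Cfg A U → ℝ) :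
    Cfg A U → ℝ :=
  fun x => ∏ p ∈ D, marg A (Finset.inter_subset_right : p.1 ∩ U ⊆ U) (ν p.2)
      (res A (Finset.inter_subset_right : p.1 ∩ U ⊆ U) x)

/-- The finite set of all partitions of `U`. -/
noncomputable def partitionsOf (U : Finset (Fin n)) : Finset (Finset (Finset (Fin n))) :=
  Finset.univ.filter fun P => IsPartition U P

/-- The finite set of all labelled partitions of `U` with labels in `L`. -/
noncomputable def lpartitionsOf (L : Type*) [Fintype L] (U : Finset (Fin n)) :
    Finset (Finset (Finset (Fin n) × L)) :=
  Finset.univ.filter fun D => IsLabelledPartition U D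

/-- The migration-recombination probability `p_𝛅(α) = r_δ ∏_{(d,λ)∈𝛅} M(α,λ)`. -/
def pmr {L : Type*} (M : L → L → ℝ) (r : Finset (Finset (Fin n)) → ℝ)
    (D : Finset (Finset (Fin n) × L)) (α : L) : ℝ :=
  r (D.image Prod.fst) * ∏ p ∈ D, M α p.2

/-- One step of the migration-recombination equation (MRE), evaluated pointwise:
`μ'(α) = ∑_δ r_δ ⊗_{d∈δ} ∑_β M(α,β) μ^d(β)`. -/
noncomputable def MREstep (A : Fin n → Type*) [∀ i, Fintype (A i)] {L : Type*} [Fintype L]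
    (M : L → L → ℝ) (r : Finset (Finset (Fin n)) → ℝ)
    (μ : L → Cfg A Finset.univ → ℝ) (α : L) : Cfg A Finset.univ → ℝ :=
  fun x => ∑ P ∈ partitionsOf (Finset.univ : Finset (Fin n)), r P *
    ∏ d ∈ P, ∑ β : L, M α β *
      marg A (Finset.subset_univ d) (μ β) (res A (Finset.subset_univ d) x)


set_option maxHeartbeats 1000000

open Finset

lemma label_exists_unique {L : Type*} {D : Finset (Finset (Fin n) × L)}
    (hD : ∀ p ∈ D, ∀ q ∈ D, p.1 = q.1 → p = q) {d : Finset (Fin n)}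
    (hd : d ∈ D.image Prod.fst) : ∃! p, p ∈ D ∧ p.1 = d := by
  obtain ⟨p, hp, hpd⟩ := mem_image.mp hd
  exact ⟨p, ⟨hp, hpd⟩, fun q ⟨hq, hqd⟩ => hD q hq p hp (hqd.trans hpd.symm)⟩

lemma sum_fiber_eq {L : Type*} [Fintype L] {P : Finset (Finset (Fin n))}
    (hP : P ∈ partitionsOf (Finset.univ : Finset (Fin n))) (F : Finset (Fin n) → L → ℝ) :
    ∑ D ∈ (lpartitionsOf L (Finset.univ : Finset (Fin n))).filter
        (fun D => D.image Prod.fst = P), ∏ p ∈ D, F p.1 p.2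
      = ∏ d ∈ P, ∑ β : L, F d β := by
  have hPpart : IsPartition Finset.univ P := (mem_filter.mp hP).2
  rw [Finset.prod_sum]
  refine Finset.sum_bij'
    (i := fun D hD => fun d hd =>
      (Finset.choose (fun p => p.1 = d) D (label_exists_unique
        ((mem_filter.mp (mem_filter.mp hD).1).2.2) ((mem_filter.mp hD).2.symm ▸ hd))).2)
    (j := fun f _ => P.attach.image fun x => (x.1, f x.1 x.2)) ?_ ?_ ?_ ?_ ?_
  · -- hi : image of i lands in pi set
    intro D hD
    simp [Finset.mem_pi]
  · -- hj : j f ∈ filter set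
    intro f hf
    have hbase : (P.attach.image fun x => (x.1, f x.1 x.2)).image Prod.fst = P := by
      rw [Finset.image_image]
      exact Finset.attach_image_val
    refine mem_filter.mpr ⟨mem_filter.mpr ⟨Finset.mem_univ _, ?_, ?_⟩, hbase⟩
    · rw [hbase]; exact hPpart
    · intro p hp q hq hpq
      obtain ⟨a, _, rfl⟩ := Finset.mem_image.mp hp
      obtain ⟨b, _, rfl⟩ := Finset.mem_image.mp hq
      have : a = b := Subtype.ext hpq
      subst this; rfl
  · -- left_inv : j (i D) = D
    intro D hD
    have hlab := (mem_filter.mp (mem_filter.mp hD).1).2.2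
    have hbase : D.image Prod.fst = P := (mem_filter.mp hD).2
    ext p
    simp only [Finset.mem_image, Finset.mem_attach, true_and]
    constructor
    · rintro ⟨a, rfl⟩
      have hmem := Finset.choose_mem (fun p => p.1 = a.1) D
        (label_exists_unique hlab (hbase.symm ▸ a.2))
      have hfst := Finset.choose_property (fun p => p.1 = a.1) D
        (label_exists_unique hlab (hbase.symm ▸ a.2))
      have : (↑a, (Finset.choose (fun p => p.1 = a.1) D
          (label_exists_unique hlab (hbase.symm ▸ a.2))).2)
          = Finset.choose (fun p => p.1 = a.1) D
            (label_exists_unique hlab (hbase.symm ▸ a.2)) := by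
        exact Prod.ext hfst.symm rfl
      rw [this]; exact hmem
    · intro hp
      have hp1 : p.1 ∈ P := hbase ▸ Finset.mem_image_of_mem Prod.fst hp
      refine ⟨⟨p.1, hp1⟩, ?_⟩
      have hu := label_exists_unique hlab (hbase.symm ▸ hp1)
      have : Finset.choose (fun q => q.1 = p.1) D hu = p :=
        hu.unique ⟨Finset.choose_mem (fun q => q.1 = p.1) D hu,
          Finset.choose_property (fun q => q.1 = p.1) D hu⟩ ⟨hp, rfl⟩
      rw [this]
  · -- right_inv : i (j f) = f
    intro f hf
    funext d hd
    set D := P.attach.image fun x => (x.1, f x.1 x.2) with hDdef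
    have hjmem : D ∈ (lpartitionsOf L (Finset.univ : Finset (Fin n))).filter
        (fun D => D.image Prod.fst = P) := by
      have hbase : D.image Prod.fst = P := by
        rw [hDdef, Finset.image_image]; exact Finset.attach_image_val
      refine mem_filter.mpr ⟨mem_filter.mpr ⟨Finset.mem_univ _, ?_, ?_⟩, hbase⟩
      · rw [hbase]; exact hPpart
      · intro p hp q hq hpq
        obtain ⟨a, _, rfl⟩ := Finset.mem_image.mp hp
        obtain ⟨b, _, rfl⟩ := Finset.mem_image.mp hq
        have : a = b := Subtype.ext hpq
        subst this; rfl
    have hlab := (mem_filter.mp (mem_filter.mp hjmem).1).2.2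
    have hbase : D.image Prod.fst = P := (mem_filter.mp hjmem).2
    have hu := label_exists_unique hlab (hbase.symm ▸ hd)
    have hmem : (d, f d hd) ∈ D := by
      rw [hDdef]
      exact Finset.mem_image.mpr ⟨⟨d, hd⟩, Finset.mem_attach _ _, rfl⟩
    have : Finset.choose (fun q => q.1 = d) D hu = (d, f d hd) :=
      hu.unique ⟨Finset.choose_mem (fun q => q.1 = d) D hu,
        Finset.choose_property (fun q => q.1 = d) D hu⟩ ⟨hmem, rfl⟩
    exact congrArg Prod.snd this
  · -- values agree
    intro D hD
    have hlab := (mem_filter.mp (mem_filter.mp hD).1).2.2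
    have hbase : D.image Prod.fst = P := (mem_filter.mp hD).2
    refine (Finset.prod_bij
      (i := fun (x : {a // a ∈ P}) _ =>
        Finset.choose (fun p => p.1 = x.1) D (label_exists_unique hlab (hbase.symm ▸ x.2)))
      ?_ ?_ ?_ ?_).symm
    · intro x _
      exact Finset.choose_mem _ _ _
    · intro a _ b _ hab
      have ha := Finset.choose_property (fun p => p.1 = a.1) D
        (label_exists_unique hlab (hbase.symm ▸ a.2))
      have hb := Finset.choose_property (fun p => p.1 = b.1) D
        (label_exists_unique hlab (hbase.symm ▸ b.2))
      exact Subtype.ext (ha ▸ hb ▸ congrArg Prod.fst hab)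
    · intro p hp
      have hp1 : p.1 ∈ P := hbase ▸ Finset.mem_image_of_mem Prod.fst hp
      refine ⟨⟨p.1, hp1⟩, Finset.mem_attach _ _, ?_⟩
      have hu := label_exists_unique hlab (hbase.symm ▸ hp1)
      exact (hu.unique ⟨Finset.choose_mem (fun q => q.1 = p.1) D hu,
        Finset.choose_property (fun q => q.1 = p.1) D hu⟩ ⟨hp, rfl⟩)
    · intro p hp
      have hfst := Finset.choose_property (fun q => q.1 = p.1) D
        (label_exists_unique hlab (hbase.symm ▸ p.2))
      exact (congrArg (fun d => F d (Finset.choose (fun q => q.1 = p.1) D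
        (label_exists_unique hlab (hbase.symm ▸ p.2))).2) hfst).symm

lemma sum_lpart_eq {L : Type*} [Fintype L] (r : Finset (Finset (Fin n)) → ℝ)
    (F : Finset (Fin n) → L → ℝ) :
    ∑ D ∈ lpartitionsOf L (Finset.univ : Finset (Fin n)),
        r (D.image Prod.fst) * ∏ p ∈ D, F p.1 p.2
      = ∑ P ∈ partitionsOf (Finset.univ : Finset (Fin n)),
          r P * ∏ d ∈ P, ∑ β : L, F d β := by
  have hmaps : ∀ D ∈ lpartitionsOf L (Finset.univ : Finset (Fin n)),
      D.image Prod.fst ∈ partitionsOf (Finset.univ : Finset (Fin n)) := by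
    intro D hD
    exact mem_filter.mpr ⟨Finset.mem_univ _, (mem_filter.mp hD).2.1⟩
  rw [← Finset.sum_fiberwise_of_maps_to hmaps]
  refine Finset.sum_congr rfl fun P hP => ?_
  rw [← sum_fiber_eq hP F, Finset.mul_sum]
  refine Finset.sum_congr rfl fun D hD => ?_
  rw [(mem_filter.mp hD).2]

lemma marg_res_congr (A : Fin n → Type*) [∀ i, Fintype (A i)]
    {U V V' : Finset (Fin n)} (h : V ⊆ U) (h' : V' ⊆ U) (e : V = V')
    (ν : Cfg A U → ℝ) (x : Cfg A U) :
    marg A h ν (res A h x) = marg A h' ν (res A h' x) := by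
  subst e; rfl

/-- the MRE can be written as `μ_{t+1} = ∑_{𝛅} p_𝛅 R_𝛅(μ_t)`, and the
migration-recombination probabilities `p_𝛅(α)` are normalised. -/
theorem MREstep_eq_sum_recomb (A : Fin n → Type*) [∀ i, Fintype (A i)]
    {L : Type*} [Fintype L]
    (M : L → L → ℝ) (hM0 : ∀ α β, 0 ≤ M α β) (hM1 : ∀ α, ∑ β, M α β = 1)
    (r : Finset (Finset (Fin n)) → ℝ) (hr0 : ∀ P, 0 ≤ r P)
    (hr1 : ∑ P ∈ partitionsOf (Finset.univ : Finset (Fin n)), r P = 1)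
    (μ : L → Cfg A Finset.univ → ℝ) :
    (∀ α x, MREstep A M r μ α x =
        ∑ D ∈ lpartitionsOf L (Finset.univ : Finset (Fin n)), pmr M r D α * recomb A D μ x) ∧
      (∀ α, ∑ D ∈ lpartitionsOf L (Finset.univ : Finset (Fin n)), pmr M r D α = 1) := by
  classical
  have key : ∀ (α : L) (F : Finset (Fin n) → L → ℝ),
      ∑ D ∈ lpartitionsOf L (Finset.univ : Finset (Fin n)),
          r (D.image Prod.fst) * ∏ p ∈ D, F p.1 p.2
        = ∑ P ∈ partitionsOf (Finset.univ : Finset (Fin n)),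
            r P * ∏ d ∈ P, ∑ β : L, F d β := fun α F => sum_lpart_eq r F
  constructor
  · intro α x
    have h1 : ∀ D ∈ lpartitionsOf L (Finset.univ : Finset (Fin n)),
        pmr M r D α * recomb A D μ x
          = r (D.image Prod.fst) * ∏ p ∈ D,
              (M α p.2 * marg A (Finset.subset_univ p.1) (μ p.2)
                (res A (Finset.subset_univ p.1) x)) := by
      intro D hD
      rw [pmr, recomb, Finset.prod_mul_distrib, mul_assoc]
      congr 1
      congr 1
      refine Finset.prod_congr rfl fun p hp => ?_
      exact marg_res_congr A _ _ (Finset.inter_univ p.1) (μ p.2) x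
    rw [Finset.sum_congr rfl h1, key α
      (fun d β => M α β * marg A (Finset.subset_univ d) (μ β) (res A (Finset.subset_univ d) x))]
    rfl
  · intro α
    have h1 : ∀ D ∈ lpartitionsOf L (Finset.univ : Finset (Fin n)),
        pmr M r D α = r (D.image Prod.fst) * ∏ p ∈ D, M α p.2 := fun D hD => rfl
    rw [Finset.sum_congr rfl h1, key α (fun _ β => M α β)]
    simp only [hM1, Finset.prod_const_one, mul_one]
    exact hr1
end

section
/- The marginal migration-recombination probabilities factorize: for U ⊆ [n], 𝛅 ∈ LS(U) with base δ, and α ∈ L, one has p^U_𝛅(α) = (∑_{δ'∈S([n]): δ'|_U = δ} r_{δ'}) · ∏_{(d,λ)∈𝛅} M(α,λ). -/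
open scoped Classical

variable {n : ℕ}

/-- The marginal migration-recombination probability
`p^U_𝛅(α) = ∑_{𝛅' : 𝛅'|_U = 𝛅} p_{𝛅'}(α)`. -/
noncomputable def pmrMarg {L : Type*} [Fintype L] (M : L → L → ℝ)
    (r : Finset (Finset (Fin n)) → ℝ) (U : Finset (Fin n))
    (D : Finset (Finset (Fin n) × L)) (α : L) : ℝ :=
  ∑ D' ∈ (lpartitionsOf L (Finset.univ : Finset (Fin n))).filter
      (fun D' => restrictL D' U = D), pmr M r D' α


section Aux

variable {L : Type*}

/-- The label attached to a block `e` in a labelled set `D` (defaulting to `α`). -/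
noncomputable def labOf (α : L) (D : Finset (Finset (Fin n) × L)) (e : Finset (Fin n)) : L :=
  if h : ∃ β, (e, β) ∈ D then h.choose else α

lemma labOf_mem (α : L) {D : Finset (Finset (Fin n) × L)} {e : Finset (Fin n)}
    (he : e ∈ D.image Prod.fst) : (e, labOf α D e) ∈ D := by
  obtain ⟨p, hp, rfl⟩ := Finset.mem_image.mp he
  have h : ∃ β, (p.1, β) ∈ D := ⟨p.2, hp⟩
  rw [labOf, dif_pos h]
  exact h.choose_spec

lemma labOf_eq (α : L) {D : Finset (Finset (Fin n) × L)}
    (hinj : ∀ p ∈ D, ∀ q ∈ D, p.1 = q.1 → p = q) {d : Finset (Fin n)} {β : L}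
    (h : (d, β) ∈ D) : labOf α D d = β := by
  have hm := labOf_mem α (Finset.mem_image_of_mem Prod.fst h)
  have := hinj _ hm _ h rfl
  exact congrArg Prod.snd this

lemma mem_labelled_iff (α : L) {U : Finset (Fin n)}
    {D : Finset (Finset (Fin n) × L)} (hD : IsLabelledPartition U D)
    {p : Finset (Fin n) × L} :
    p ∈ D ↔ p.1 ∈ D.image Prod.fst ∧ p.2 = labOf α D p.1 := by
  constructor
  · intro hp
    exact ⟨Finset.mem_image_of_mem _ hp, (labOf_eq α hD.2 (show (p.1, p.2) ∈ D from hp)).symm⟩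
  · rintro ⟨h1, h2⟩
    have := labOf_mem α h1
    rw [← h2] at this
    simpa using this

lemma restrictL_image_fst (D' : Finset (Finset (Fin n) × L)) (U : Finset (Fin n)) :
    (restrictL D' U).image Prod.fst = restrictP (D'.image Prod.fst) U := by
  ext e
  simp only [restrictL, restrictP, Finset.mem_image, Finset.mem_filter]
  constructor
  · rintro ⟨p, ⟨⟨q, hq, rfl⟩, hne⟩, rfl⟩
    exact ⟨⟨q.1, ⟨q, hq, rfl⟩, rfl⟩, hne⟩
  · rintro ⟨⟨d, ⟨q, hq, rfl⟩, rfl⟩, hne⟩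
    exact ⟨(q.1 ∩ U, q.2), ⟨⟨q, hq, rfl⟩, hne⟩, rfl⟩

lemma base_mem_partitionsOf {L : Type*} [Fintype L] {D' : Finset (Finset (Fin n) × L)}
    (h : D' ∈ lpartitionsOf L (Finset.univ : Finset (Fin n))) :
    D'.image Prod.fst ∈ partitionsOf (Finset.univ : Finset (Fin n)) := by
  simp only [lpartitionsOf, Finset.mem_filter, Finset.mem_univ, true_and] at h
  simp only [partitionsOf, Finset.mem_filter, Finset.mem_univ, true_and]
  exact h.1

end Aux

set_option maxHeartbeats 2000000 in
/-- the marginal migration-recombination probabilities factorise: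
`p^U_𝛅(α) = (∑_{δ' : δ'|_U = δ} r_{δ'}) ∏_{(d,λ)∈𝛅} M(α,λ)`. -/
theorem pmrMarg_factorisation {L : Type*} [Fintype L]
    (M : L → L → ℝ) (hM0 : ∀ α β, 0 ≤ M α β) (hM1 : ∀ α, ∑ β, M α β = 1)
    (r : Finset (Finset (Fin n)) → ℝ) (hr0 : ∀ P, 0 ≤ r P)
    (hr1 : ∑ P ∈ partitionsOf (Finset.univ : Finset (Fin n)), r P = 1)
    (U : Finset (Fin n)) (D : Finset (Finset (Fin n) × L))
    (hD : IsLabelledPartition U D) (α : L) :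
    pmrMarg M r U D α =
      (∑ P ∈ (partitionsOf (Finset.univ : Finset (Fin n))).filter
          (fun P => restrictP P U = D.image Prod.fst), r P) *
        ∏ p ∈ D, M α p.2 := by
  classical
  obtain ⟨hDpart, hDinj⟩ := hD
  set lab : Finset (Fin n) → L := labOf α D with hlabdef
  set S := (lpartitionsOf L (Finset.univ : Finset (Fin n))).filter
      (fun D' => restrictL D' U = D) with hS
  have key : ∀ P ∈ partitionsOf (Finset.univ : Finset (Fin n)),
      (∑ D' ∈ S.filter (fun D' => D'.image Prod.fst = P), pmr M r D' α)
        = (if restrictP P U = D.image Prod.fst then r P * ∏ p ∈ D, M α p.2 else 0) := by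
    intro P hPmem
    have hPp : IsPartition (Finset.univ : Finset (Fin n)) P := by
      simpa only [partitionsOf, Finset.mem_filter, Finset.mem_univ, true_and] using hPmem
    by_cases h : restrictP P U = D.image Prod.fst
    · rw [if_pos h]
      -- the set of admissible labellings of each block
      set A : Finset (Fin n) → Finset L :=
        fun d => if (d ∩ U).Nonempty then {lab (d ∩ U)} else Finset.univ with hA
      set T := S.filter (fun D' => D'.image Prod.fst = P) with hT
      -- membership in T unfolded
      have hTmem : ∀ D' ∈ T, IsLabelledPartition (Finset.univ : Finset (Fin n)) D' ∧
          restrictL D' U = D ∧ D'.image Prod.fst = P := by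
        intro D' hD'
        simp only [hT, hS, lpartitionsOf, Finset.mem_filter, Finset.mem_univ, true_and] at hD'
        exact ⟨hD'.1.1, hD'.1.2, hD'.2⟩
      -- the forward map
      set Φ : (∀ a ∈ P, L) → Finset (Finset (Fin n) × L) :=
        fun f => P.attach.image (fun x => (x.1, f x.1 x.2)) with hΦ
      have hΦbase : ∀ f, (Φ f).image Prod.fst = P := by
        intro f
        rw [hΦ, Finset.image_image]
        exact Finset.attach_image_val
      have hΦinj : ∀ f, ∀ p ∈ Φ f, ∀ q ∈ Φ f, p.1 = q.1 → p = q := by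
        intro f p hp q hq hpq
        simp only [hΦ, Finset.mem_image, Finset.mem_attach, true_and] at hp hq
        obtain ⟨x, rfl⟩ := hp
        obtain ⟨y, rfl⟩ := hq
        have : x = y := Subtype.ext hpq
        subst this; rfl
      have hΦlp : ∀ f, IsLabelledPartition (Finset.univ : Finset (Fin n)) (Φ f) := by
        intro f
        refine ⟨?_, hΦinj f⟩
        rw [hΦbase f]; exact hPp
      -- step A : pull out r P
      have stepA : (∑ D' ∈ T, pmr M r D' α)
          = r P * ∑ D' ∈ T, ∏ p ∈ D', M α p.2 := by
        rw [Finset.mul_sum]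
        refine Finset.sum_congr rfl fun D' hD' => ?_
        rw [pmr, (hTmem D' hD').2.2]
      rw [stepA]
      congr 1
      -- step B1 : the product over D equals the blockwise product of sums
      have stepB1 : (∏ p ∈ D, M α p.2) = ∏ d ∈ P, ∑ β ∈ A d, M α β := by
        have h1 : ∀ d ∈ P, (∑ β ∈ A d, M α β)
            = (if (d ∩ U).Nonempty then M α (lab (d ∩ U)) else 1) := by
          intro d _
          by_cases hne : (d ∩ U).Nonempty
          · rw [if_pos hne, hA]; simp [hne]
          · rw [if_neg hne, hA]; simp [hne, hM1 α]
        rw [Finset.prod_congr rfl h1]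
        rw [← Finset.prod_filter_mul_prod_filter_not P (fun d => (d ∩ U).Nonempty)]
        have h2 : (∏ d ∈ P.filter (fun d => ¬ (d ∩ U).Nonempty),
            (if (d ∩ U).Nonempty then M α (lab (d ∩ U)) else 1)) = 1 := by
          refine Finset.prod_eq_one fun d hd => ?_
          rw [if_neg (Finset.mem_filter.mp hd).2]
        have h3 : (∏ d ∈ P.filter (fun d => (d ∩ U).Nonempty),
            (if (d ∩ U).Nonempty then M α (lab (d ∩ U)) else 1))
            = ∏ d ∈ P.filter (fun d => (d ∩ U).Nonempty), M α (lab (d ∩ U)) := by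
          refine Finset.prod_congr rfl fun d hd => ?_
          rw [if_pos (Finset.mem_filter.mp hd).2]
        rw [h2, h3, mul_one]
        -- blocks meeting U are in bijection with blocks of D via d ↦ d ∩ U
        have hinj : ∀ d ∈ P.filter (fun d => (d ∩ U).Nonempty),
            ∀ d' ∈ P.filter (fun d => (d ∩ U).Nonempty), d ∩ U = d' ∩ U → d = d' := by
          intro d hd d' hd' hdd
          simp only [Finset.mem_filter] at hd hd'
          by_contra hne
          have hdisj := hPp.2.1 d hd.1 d' hd'.1 hne
          obtain ⟨i, hi⟩ := hd.2
          have hi' : i ∈ d' ∩ U := hdd ▸ hi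
          exact (Finset.disjoint_left.mp hdisj (Finset.mem_inter.mp hi).1
            (Finset.mem_inter.mp hi').1)
        have himage : (P.filter (fun d => (d ∩ U).Nonempty)).image (fun d => d ∩ U)
            = D.image Prod.fst := by
          rw [← h, restrictP]
          ext e
          simp only [Finset.mem_image, Finset.mem_filter]
          constructor
          · rintro ⟨d, ⟨hd, hne⟩, rfl⟩
            exact ⟨⟨d, hd, rfl⟩, hne⟩
          · rintro ⟨⟨d, hd, rfl⟩, hne⟩
            exact ⟨d, ⟨hd, hne⟩, rfl⟩
        calc (∏ p ∈ D, M α p.2) = ∏ p ∈ D, M α (lab p.1) := by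
              refine Finset.prod_congr rfl fun p hp => ?_
              rw [hlabdef, labOf_eq α hDinj (show (p.1, p.2) ∈ D from hp)]
          _ = ∏ e ∈ D.image Prod.fst, M α (lab e) := by
              rw [Finset.prod_image hDinj]
          _ = ∏ d ∈ P.filter (fun d => (d ∩ U).Nonempty), M α (lab (d ∩ U)) := by
              rw [← himage, Finset.prod_image hinj]
      rw [stepB1, Finset.prod_sum]
      -- step B3 : the bijection between labellings and labelled partitions in T
      refine (Finset.sum_nbij' Φ (fun D' => fun d _ => labOf α D' d) ?_ ?_ ?_ ?_ ?_).symm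
      · -- Φ maps into T
        intro f hf
        rw [Finset.mem_pi] at hf
        have hres : restrictL (Φ f) U = D := by
          ext q
          simp only [restrictL, Finset.mem_filter, Finset.mem_image]
          constructor
          · rintro ⟨⟨p, hp, rfl⟩, hne⟩
            simp only [hΦ, Finset.mem_image, Finset.mem_attach, true_and] at hp
            obtain ⟨x, rfl⟩ := hp
            have hAx := hf x.1 x.2
            simp only [hA, if_pos hne, Finset.mem_singleton] at hAx
            have hbm : x.1 ∩ U ∈ D.image Prod.fst := by
              rw [← h, restrictP]
              simp only [Finset.mem_filter, Finset.mem_image]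
              exact ⟨⟨x.1, x.2, rfl⟩, hne⟩
            rw [mem_labelled_iff α ⟨hDpart, hDinj⟩]
            exact ⟨hbm, hAx⟩
          · intro hq
            have hq' := (mem_labelled_iff α ⟨hDpart, hDinj⟩).mp hq
            have : q.1 ∈ restrictP P U := h ▸ hq'.1
            simp only [restrictP, Finset.mem_filter, Finset.mem_image] at this
            obtain ⟨⟨d, hd, hdU⟩, hne⟩ := this
            have hne' : (d ∩ U).Nonempty := hdU ▸ hne
            have hAd := hf d hd
            simp only [hA, if_pos hne', Finset.mem_singleton] at hAd
            refine ⟨⟨(d, f d hd), ?_, ?_⟩, hne⟩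
            · simp only [hΦ, Finset.mem_image, Finset.mem_attach, true_and]
              exact ⟨⟨d, hd⟩, rfl⟩
            · have hsnd : f d hd = q.2 := by rw [hAd, hdU]; exact hq'.2.symm
              exact Prod.ext hdU hsnd
        simp only [hT, hS, Finset.mem_filter, lpartitionsOf, Finset.mem_univ, true_and]
        exact ⟨⟨hΦlp f, hres⟩, hΦbase f⟩
      · -- the inverse maps into the pi set
        intro D' hD'
        obtain ⟨hlp, hres, hbase⟩ := hTmem D' hD'
        rw [Finset.mem_pi]
        intro d hd
        simp only [hA]
        by_cases hne : (d ∩ U).Nonempty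
        · rw [if_pos hne, Finset.mem_singleton]
          have hdm : d ∈ D'.image Prod.fst := hbase ▸ hd
          have h1 : (d, labOf α D' d) ∈ D' := labOf_mem α hdm
          have h2 : (d ∩ U, labOf α D' d) ∈ D := by
            rw [← hres, restrictL]
            simp only [Finset.mem_filter, Finset.mem_image]
            exact ⟨⟨(d, labOf α D' d), h1, rfl⟩, hne⟩
          rw [hlabdef]
          exact (labOf_eq α hDinj h2).symm
        · rw [if_neg hne]; exact Finset.mem_univ _

      · -- left inverse
        intro f hf
        funext d hd
        have hm : (d, f d hd) ∈ Φ f := by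
          simp only [hΦ, Finset.mem_image, Finset.mem_attach, true_and]
          exact ⟨⟨d, hd⟩, rfl⟩
        exact labOf_eq α (hΦinj f) hm
      · -- right inverse
        intro D' hD'
        obtain ⟨hlp, hres, hbase⟩ := hTmem D' hD'
        ext p
        constructor
        · intro hp
          simp only [hΦ, Finset.mem_image, Finset.mem_attach, true_and] at hp
          obtain ⟨x, rfl⟩ := hp
          exact labOf_mem α (hbase ▸ x.2)
        · intro hp
          have hp' := (mem_labelled_iff α hlp).mp hp
          simp only [hΦ, Finset.mem_image, Finset.mem_attach, true_and]
          exact ⟨⟨p.1, hbase ▸ hp'.1⟩, Prod.ext rfl hp'.2.symm⟩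
      · -- values agree
        intro f hf
        rw [hΦ, Finset.prod_image (fun x _ y _ hxy =>
          Subtype.ext (congrArg Prod.fst hxy))]
    · rw [if_neg h]
      refine Finset.sum_eq_zero fun D' hD' => ?_
      exfalso
      apply h
      simp only [hS, Finset.mem_filter] at hD'
      obtain ⟨⟨_, hres⟩, hbase⟩ := hD'
      rw [← hbase, ← restrictL_image_fst, hres]
  have hmaps : ∀ D' ∈ S, D'.image Prod.fst ∈ partitionsOf (Finset.univ : Finset (Fin n)) := by
    intro D' hD'
    exact base_mem_partitionsOf (Finset.mem_filter.mp hD').1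
  calc pmrMarg M r U D α
      = ∑ P ∈ partitionsOf (Finset.univ : Finset (Fin n)),
          ∑ D' ∈ S.filter (fun D' => D'.image Prod.fst = P), pmr M r D' α := by
        rw [Finset.sum_fiberwise_of_maps_to hmaps]
        rfl
    _ = ∑ P ∈ partitionsOf (Finset.univ : Finset (Fin n)),
          (if restrictP P U = D.image Prod.fst then r P * ∏ p ∈ D, M α p.2 else 0) :=
        Finset.sum_congr rfl key
    _ = _ := by
        rw [Finset.sum_mul, Finset.sum_filter]
end

section
/- If (μ_t) solves the migration-recombination equation, then the vector R(μ_t) = (R_𝛅(μ_t))_{𝛅∈LS([n])} satisfies the linear recursion R(μ_{t+1}) = T R(μ_t), where T is the stochastic matrix T_{𝛅𝛆} = 1_{𝛆≼𝛅} ∏_{(d,λ)∈𝛅} p^d_{𝛆|_d}(λ); consequently R(μ_t) = T^t R(μ_0). -/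
open scoped Classical

variable {n : ℕ}

/-- The marginal migration-recombination probability, in factorised form (Lemma 4.3):
`p^U_𝛅(α) = (∑_{δ' : δ'|_U = base 𝛅} r_{δ'}) ∏_{(d,λ)∈𝛅} M(α,λ)`. -/
noncomputable def pUfact {L : Type*} (M : L → L → ℝ) (r : Finset (Finset (Fin n)) → ℝ)
    (U : Finset (Fin n)) (D : Finset (Finset (Fin n) × L)) (α : L) : ℝ :=
  (∑ P ∈ (partitionsOf (Finset.univ : Finset (Fin n))).filter
      (fun P => restrictP P U = D.image Prod.fst), r P) * ∏ p ∈ D, M α p.2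

/-- The entry `T_{𝛅𝛆}` of the transition matrix of the labelled partitioning process. -/
noncomputable def Tent {L : Type*} (M : L → L → ℝ) (r : Finset (Finset (Fin n)) → ℝ)
    (D E : Finset (Finset (Fin n) × L)) : ℝ :=
  if RefinesL E D then ∏ p ∈ D, pUfact M r p.1 (restrictL E p.1) p.2 else 0

/-- The type of labelled partitions of `[n]` with labels in `L`. -/
abbrev LPfull (n : ℕ) (L : Type*) :=
  {D : Finset (Finset (Fin n) × L) // IsLabelledPartition (Finset.univ : Finset (Fin n)) D}

/-- The transition matrix `T` of the labelled partitioning process. -/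
noncomputable def TmatM {L : Type*} (M : L → L → ℝ) (r : Finset (Finset (Fin n)) → ℝ) :
    Matrix (LPfull n L) (LPfull n L) ℝ :=
  fun D E => Tent M r D.1 E.1

section Helpers

variable (A : Fin n → Type*) [∀ i, Fintype (A i)]
set_option linter.unusedSectionVars false

lemma res_res {U V W : Finset (Fin n)} (h1 : V ⊆ U) (h2 : W ⊆ V) (x : Cfg A U) :
    res A h2 (res A h1 x) = res A (h2.trans h1) x := rfl

lemma marg_congr {V W : Finset (Fin n)} (hVW : V = W) (ν : Cfg A Finset.univ → ℝ)
    (x : Cfg A V) (y : Cfg A W)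
    (hxy : ∀ i (hi : i ∈ V) (hi' : i ∈ W), x ⟨i, hi⟩ = y ⟨i, hi'⟩) :
    marg A (Finset.subset_univ V) ν x = marg A (Finset.subset_univ W) ν y := by
  subst hVW
  have : x = y := funext fun i => hxy i.1 i.2 i.2
  rw [this]

lemma partition_cover {U : Finset (Fin n)} {P : Finset (Finset (Fin n))}
    (hP : IsPartition U P) {i : Fin n} (hi : i ∈ U) : ∃ d ∈ P, i ∈ d := by
  have := hP.2.2
  rw [← this] at hi
  simpa using (Finset.mem_sup.mp hi)

lemma sum_cfg_prod {P : Finset (Finset (Fin n))} (hP : IsPartition Finset.univ P)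
    (f : ∀ d : Finset (Fin n), Cfg A d → ℝ) :
    ∑ y : Cfg A Finset.univ, ∏ d ∈ P, f d (res A (Finset.subset_univ d) y)
      = ∏ d ∈ P, ∑ z : Cfg A d, f d z := by
  classical
  rw [Finset.prod_sum]
  have hcov : ∀ i : Fin n, ∃ d, d ∈ P ∧ i ∈ d := by
    intro i
    obtain ⟨d, hd, hid⟩ := partition_cover hP (Finset.mem_univ i)
    exact ⟨d, hd, hid⟩
  choose blk hblkP hblkmem using hcov
  have huniq : ∀ i d, d ∈ P → i ∈ d → blk i = d := by
    intro i d hd hid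
    by_contra hne
    exact Finset.disjoint_left.mp (hP.2.1 _ (hblkP i) _ hd hne) (hblkmem i) hid
  refine Finset.sum_bij' (fun y _ => fun d _ => res A (Finset.subset_univ d) y)
    (fun p _ => fun i => p (blk i.1) (hblkP i.1) ⟨i.1, hblkmem i.1⟩) ?_ ?_ ?_ ?_ ?_
  · intro y _
    rw [Finset.mem_pi]
    intro d _
    exact Finset.mem_univ _
  · intro p _
    exact Finset.mem_univ _
  · intro y _
    funext i
    rfl
  · intro p hp
    funext d hd
    funext j
    obtain ⟨j0, hj0⟩ := j
    have hbd : blk j0 = d := huniq j0 d hd hj0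
    subst hbd
    rfl
  · intro y _
    exact (Finset.prod_attach P fun d => f d (res A (Finset.subset_univ d) y)).symm

end Helpers
section Helpers2

variable (A : Fin n → Type*) [∀ i, Fintype (A i)]
set_option linter.unusedSectionVars false

lemma prod_ite_zero {ι : Type*} (s : Finset ι) (c : ι → Prop) [DecidablePred c] (g : ι → ℝ) :
    (∏ i ∈ s, if c i then g i else 0) = if ∀ i ∈ s, c i then ∏ i ∈ s, g i else 0 := by
  by_cases h : ∀ i ∈ s, c i
  · rw [if_pos h]
    exact Finset.prod_congr rfl fun i hi => if_pos (h i hi)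
  · rw [if_neg h]
    push_neg at h
    obtain ⟨i, hi, hci⟩ := h
    exact Finset.prod_eq_zero hi (if_neg hci)

lemma marg_prod {P : Finset (Finset (Fin n))} (hP : IsPartition Finset.univ P)
    (f : ∀ d : Finset (Fin n), Cfg A d → ℝ) (V : Finset (Fin n)) (x : Cfg A V) :
    marg A (Finset.subset_univ V) (fun y => ∏ d ∈ P, f d (res A (Finset.subset_univ d) y)) x
      = ∏ d ∈ P, marg A (Finset.inter_subset_left : d ∩ V ⊆ d) (f d)
          (res A (Finset.inter_subset_right : d ∩ V ⊆ V) x) := by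
  have step1 : marg A (Finset.subset_univ V)
        (fun y => ∏ d ∈ P, f d (res A (Finset.subset_univ d) y)) x
      = ∑ y : Cfg A Finset.univ, ∏ d ∈ P,
          (if res A (Finset.inter_subset_left : d ∩ V ⊆ d) (res A (Finset.subset_univ d) y)
              = res A (Finset.inter_subset_right : d ∩ V ⊆ V) x
            then f d (res A (Finset.subset_univ d) y) else 0) := by
    simp only [marg]
    refine Finset.sum_congr rfl fun y _ => ?_
    by_cases h : res A (Finset.subset_univ V) y = x
    · rw [if_pos h]
      symm
      refine Finset.prod_congr rfl fun d _ => ?_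
      rw [if_pos]
      subst h
      rfl
    · rw [if_neg h]
      symm
      have hex : ∃ d ∈ P, ¬ (res A (Finset.inter_subset_left : d ∩ V ⊆ d)
          (res A (Finset.subset_univ d) y)
          = res A (Finset.inter_subset_right : d ∩ V ⊆ V) x) := by
        by_contra hall
        push_neg at hall
        apply h
        funext i
        obtain ⟨d, hd, hid⟩ := partition_cover hP (Finset.mem_univ i.1)
        exact congrFun (hall d hd) ⟨i.1, Finset.mem_inter.mpr ⟨hid, i.2⟩⟩
      obtain ⟨d, hd, hne⟩ := hex
      exact Finset.prod_eq_zero hd (if_neg hne)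
  have step2 : (∑ y : Cfg A Finset.univ, ∏ d ∈ P,
          (if res A (Finset.inter_subset_left : d ∩ V ⊆ d) (res A (Finset.subset_univ d) y)
              = res A (Finset.inter_subset_right : d ∩ V ⊆ V) x
            then f d (res A (Finset.subset_univ d) y) else 0))
      = ∏ d ∈ P, ∑ z : Cfg A d,
          (if res A (Finset.inter_subset_left : d ∩ V ⊆ d) z
              = res A (Finset.inter_subset_right : d ∩ V ⊆ V) x then f d z else 0) :=
    sum_cfg_prod A hP (fun d z =>
      if res A (Finset.inter_subset_left : d ∩ V ⊆ d) z
          = res A (Finset.inter_subset_right : d ∩ V ⊆ V) x then f d z else 0)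
  have step3 : (∏ d ∈ P, ∑ z : Cfg A d,
          (if res A (Finset.inter_subset_left : d ∩ V ⊆ d) z
              = res A (Finset.inter_subset_right : d ∩ V ⊆ V) x then f d z else 0))
      = ∏ d ∈ P, marg A (Finset.inter_subset_left : d ∩ V ⊆ d) (f d)
          (res A (Finset.inter_subset_right : d ∩ V ⊆ V) x) := rfl
  rw [step1, step2, step3]

lemma marg_marg {U V : Finset (Fin n)} (h1 : U ⊆ Finset.univ) (h2 : V ⊆ U)
    (ν : Cfg A Finset.univ → ℝ) (x : Cfg A V) :
    marg A h2 (marg A h1 ν) x = marg A (h2.trans h1) ν x := by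
  simp only [marg]
  have step1 : ∀ z : Cfg A U,
      (if res A h2 z = x then ∑ y : Cfg A Finset.univ, if res A h1 y = z then ν y else 0 else 0)
      = ∑ y : Cfg A Finset.univ,
          if res A h1 y = z then (if res A h2 z = x then ν y else 0) else 0 := by
    intro z
    split_ifs with h
    · exact Finset.sum_congr rfl fun y _ => by split_ifs <;> simp [h]
    · symm
      refine Finset.sum_eq_zero fun y _ => ?_
      split_ifs <;> simp_all
  rw [Finset.sum_congr rfl fun z _ => step1 z, Finset.sum_comm]
  refine Finset.sum_congr rfl fun y _ => ?_
  have : ∀ z : Cfg A U, (if res A h1 y = z then (if res A h2 z = x then ν y else 0) else 0)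
      = if res A h1 y = z then (if res A (h2.trans h1) y = x then ν y else 0) else 0 := by
    intro z
    by_cases hA : res A h1 y = z
    · subst hA
      rw [res_res A h1 h2]
    · simp [hA]
  rw [Finset.sum_congr rfl fun z _ => this z, Finset.sum_ite_eq]
  simp

lemma sum_marg {V : Finset (Fin n)} (h : V ⊆ Finset.univ) (ν : Cfg A Finset.univ → ℝ) :
    ∑ z : Cfg A V, marg A h ν z = ∑ y, ν y := by
  simp only [marg]
  rw [Finset.sum_comm]
  refine Finset.sum_congr rfl fun y _ => ?_
  rw [Finset.sum_ite_eq]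
  simp

lemma marg_sum_comm {U V : Finset (Fin n)} (h : V ⊆ U) {ι : Type*} (s : Finset ι)
    (c : ι → ℝ) (ν : ι → Cfg A U → ℝ) (x : Cfg A V) :
    marg A h (fun z => ∑ β ∈ s, c β * ν β z) x = ∑ β ∈ s, c β * marg A h (ν β) x := by
  simp only [marg]
  have : ∀ y : Cfg A U, (if res A h y = x then ∑ β ∈ s, c β * ν β y else 0)
      = ∑ β ∈ s, if res A h y = x then c β * ν β y else 0 := by
    intro y
    split_ifs <;> simp
  rw [Finset.sum_congr rfl fun y _ => this y, Finset.sum_comm]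
  refine Finset.sum_congr rfl fun β _ => ?_
  rw [Finset.mul_sum]
  refine Finset.sum_congr rfl fun y _ => ?_
  split_ifs <;> simp

lemma marg_empty_eq (ν : Cfg A Finset.univ → ℝ) (x : Cfg A (∅ : Finset (Fin n))) :
    marg A (Finset.subset_univ ∅) ν x = ∑ y, ν y := by
  simp only [marg]
  refine Finset.sum_congr rfl fun y _ => ?_
  rw [if_pos]
  funext i
  exact absurd i.2 (Finset.notMem_empty i.1)

lemma mem_partitionsOf {U : Finset (Fin n)} {P : Finset (Finset (Fin n))} :
    P ∈ partitionsOf U ↔ IsPartition U P := by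
  simp [partitionsOf]

lemma mem_lpartitionsOf {L : Type*} [Fintype L] {U : Finset (Fin n)}
    {E : Finset (Finset (Fin n) × L)} :
    E ∈ lpartitionsOf L U ↔ IsLabelledPartition U E := by
  simp [lpartitionsOf]

lemma mass_MREstep {L : Type*} [Fintype L] (M : L → L → ℝ) (hM1 : ∀ α, ∑ β, M α β = 1)
    (r : Finset (Finset (Fin n)) → ℝ)
    (hr1 : ∑ P ∈ partitionsOf (Finset.univ : Finset (Fin n)), r P = 1)
    (μ : L → Cfg A Finset.univ → ℝ) (hmass : ∀ β, ∑ y, μ β y = 1) (α : L) :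
    ∑ y, MREstep A M r μ α y = 1 := by
  simp only [MREstep]
  rw [Finset.sum_comm]
  calc ∑ P ∈ partitionsOf (Finset.univ : Finset (Fin n)), ∑ y : Cfg A Finset.univ,
        r P * ∏ d ∈ P, ∑ β : L, M α β *
          marg A (Finset.subset_univ d) (μ β) (res A (Finset.subset_univ d) y)
      = ∑ P ∈ partitionsOf (Finset.univ : Finset (Fin n)), r P := by
        refine Finset.sum_congr rfl fun P hP => ?_
        rw [← Finset.mul_sum,
          sum_cfg_prod A (mem_partitionsOf.mp hP)
            (fun d z => ∑ β : L, M α β * marg A (Finset.subset_univ d) (μ β) z)]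
        have : ∀ d ∈ P, (∑ z : Cfg A d, ∑ β : L,
            M α β * marg A (Finset.subset_univ d) (μ β) z) = 1 := by
          intro d _
          rw [Finset.sum_comm]
          calc ∑ β : L, ∑ z : Cfg A d, M α β * marg A (Finset.subset_univ d) (μ β) z
              = ∑ β : L, M α β := by
                refine Finset.sum_congr rfl fun β _ => ?_
                rw [← Finset.mul_sum, sum_marg, hmass, mul_one]
            _ = 1 := hM1 α
        rw [Finset.prod_congr rfl this]
        simp
    _ = 1 := hr1

end Helpers2
section Helpers3

set_option linter.unusedSectionVars false

variable {L : Type*}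

lemma lp_nonempty {V : Finset (Fin n)} {E : Finset (Finset (Fin n) × L)}
    (hE : IsLabelledPartition V E) {q : Finset (Fin n) × L} (hq : q ∈ E) : q.1.Nonempty :=
  hE.1.1 q.1 (Finset.mem_image_of_mem Prod.fst hq)

lemma lp_block_subset {V : Finset (Fin n)} {E : Finset (Finset (Fin n) × L)}
    (hE : IsLabelledPartition V E) {q : Finset (Fin n) × L} (hq : q ∈ E) : q.1 ⊆ V := by
  have h : id q.1 ≤ (E.image Prod.fst).sup id :=
    Finset.le_sup (f := (id : Finset (Fin n) → Finset (Fin n))) (Finset.mem_image_of_mem Prod.fst hq)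
  rw [hE.1.2.2] at h
  exact h

lemma lp_disjoint {V : Finset (Fin n)} {E : Finset (Finset (Fin n) × L)}
    (hE : IsLabelledPartition V E) {p q : Finset (Fin n) × L} (hp : p ∈ E) (hq : q ∈ E)
    (hne : p ≠ q) : Disjoint p.1 q.1 := by
  have hfst : p.1 ≠ q.1 := fun h => hne (hE.2 p hp q hq h)
  exact hE.1.2.1 p.1 (Finset.mem_image_of_mem Prod.fst hp) q.1
    (Finset.mem_image_of_mem Prod.fst hq) hfst

lemma isPartition_restrictP {P : Finset (Finset (Fin n))}
    (hP : IsPartition Finset.univ P) (V : Finset (Fin n)) :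
    IsPartition V (restrictP P V) := by
  refine ⟨fun b hb => (Finset.mem_filter.mp hb).2, ?_, ?_⟩
  · intro b hb c hc hbc
    obtain ⟨d, hd, rfl⟩ := Finset.mem_image.mp (Finset.mem_filter.mp hb).1
    obtain ⟨d', hd', rfl⟩ := Finset.mem_image.mp (Finset.mem_filter.mp hc).1
    have hdd : d ≠ d' := fun h => hbc (by rw [h])
    exact (hP.2.1 d hd d' hd' hdd).mono Finset.inter_subset_left Finset.inter_subset_left
  · apply subset_antisymm
    · show (restrictP P V).sup id ≤ V
      refine Finset.sup_le fun b hb => ?_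
      show id b ≤ V
      obtain ⟨d, _, rfl⟩ := Finset.mem_image.mp (Finset.mem_filter.mp hb).1
      exact Finset.inter_subset_right
    · intro i hi
      obtain ⟨d, hd, hid⟩ := partition_cover hP (Finset.mem_univ i)
      refine Finset.mem_sup.mpr ⟨d ∩ V, ?_, Finset.mem_inter.mpr ⟨hid, hi⟩⟩
      exact Finset.mem_filter.mpr ⟨Finset.mem_image_of_mem _ hd, ⟨i, Finset.mem_inter.mpr ⟨hid, hi⟩⟩⟩

lemma restrictP_eq_image (P : Finset (Finset (Fin n))) (V : Finset (Fin n)) :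
    restrictP P V = (P.filter fun d => (d ∩ V).Nonempty).image (fun d => d ∩ V) := by
  ext b
  simp only [restrictP, Finset.mem_filter, Finset.mem_image]
  constructor
  · rintro ⟨⟨d, hd, rfl⟩, hne⟩
    exact ⟨d, ⟨hd, hne⟩, rfl⟩
  · rintro ⟨d, ⟨hd, hne⟩, rfl⟩
    exact ⟨⟨d, hd, rfl⟩, hne⟩

lemma image_fst_restrictL (E : Finset (Finset (Fin n) × L)) (V : Finset (Fin n)) :
    (restrictL E V).image Prod.fst = restrictP (E.image Prod.fst) V := by
  ext b
  simp only [restrictL, restrictP, Finset.mem_image, Finset.mem_filter]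
  constructor
  · rintro ⟨p, ⟨⟨a, ha, rfl⟩, hne⟩, rfl⟩
    exact ⟨⟨a.1, ⟨a, ha, rfl⟩, rfl⟩, hne⟩
  · rintro ⟨⟨c, ⟨a, ha, rfl⟩, rfl⟩, hne⟩
    exact ⟨(a.1 ∩ V, a.2), ⟨⟨a, ha, rfl⟩, hne⟩, rfl⟩

lemma isLabelledPartition_restrictL {E : Finset (Finset (Fin n) × L)}
    (hE : IsLabelledPartition Finset.univ E) (V : Finset (Fin n)) :
    IsLabelledPartition V (restrictL E V) := by
  constructor
  · rw [image_fst_restrictL]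
    exact isPartition_restrictP hE.1 V
  · intro p hp q hq hfst
    simp only [restrictL, Finset.mem_filter, Finset.mem_image] at hp hq
    obtain ⟨⟨a, ha, rfl⟩, hne⟩ := hp
    obtain ⟨⟨b, hb, rfl⟩, hne'⟩ := hq
    simp only at hfst
    have hab : a = b := by
      by_contra h
      have hd := (lp_disjoint hE ha hb h).mono
        (Finset.inter_subset_left : a.1 ∩ V ⊆ a.1)
        (Finset.inter_subset_left : b.1 ∩ V ⊆ b.1)
      rw [hfst] at hd
      exact hne'.ne_empty (by simpa using disjoint_self.mp hd)
    subst hab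
    rfl

lemma refines_restrictL_eq_filter {D E : Finset (Finset (Fin n) × L)}
    (hD : IsLabelledPartition Finset.univ D) (hE : IsLabelledPartition Finset.univ E)
    (href : RefinesL E D) {p : Finset (Fin n) × L} (hp : p ∈ D) :
    restrictL E p.1 = E.filter (fun q => q.1 ⊆ p.1) := by
  ext q
  simp only [restrictL, Finset.mem_filter, Finset.mem_image]
  constructor
  · rintro ⟨⟨a, ha, rfl⟩, hne⟩
    obtain ⟨p', hp', hsub⟩ := href a ha
    have hpp : p' = p := by
      by_contra hne'
      have hd := (lp_disjoint hD hp' hp hne').mono hsub (subset_refl p.1)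
      rw [Finset.disjoint_left] at hd
      obtain ⟨i, hi⟩ := hne
      exact hd (Finset.mem_inter.mp hi).1 (Finset.mem_inter.mp hi).2
    subst hpp
    have heq : a.1 ∩ p'.1 = a.1 := Finset.inter_eq_left.mpr hsub
    constructor
    · rw [show ((a.1 ∩ p'.1, a.2) : Finset (Fin n) × L) = a from Prod.ext heq rfl]
      exact ha
    · exact Finset.inter_subset_right
  · rintro ⟨hqE, hsub⟩
    exact ⟨⟨q, hqE, Prod.ext (Finset.inter_eq_left.mpr hsub) rfl⟩,
      (Finset.inter_eq_left.mpr hsub).symm ▸ lp_nonempty hE hqE⟩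

end Helpers3
section Helpers4

set_option linter.unusedSectionVars false

lemma prod_sum_labelings {L : Type*} [Fintype L] {V : Finset (Fin n)}
    {Q : Finset (Finset (Fin n))} (hQ : IsPartition V Q) (w : Finset (Fin n) → L → ℝ) :
    ∏ e ∈ Q, ∑ β : L, w e β
      = ∑ E ∈ (lpartitionsOf L V).filter (fun E => E.image Prod.fst = Q),
          ∏ q ∈ E, w q.1 q.2 := by
  classical
  rw [Finset.prod_sum]
  have exlab : ∀ E ∈ (lpartitionsOf L V).filter (fun E => E.image Prod.fst = Q),
      ∀ e ∈ Q, ∃ l : L, (e, l) ∈ E := by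
    intro E hE e he
    have hbase := (Finset.mem_filter.mp hE).2
    rw [← hbase] at he
    obtain ⟨q, hq, rfl⟩ := Finset.mem_image.mp he
    exact ⟨q.2, hq⟩
  refine Finset.sum_bij' (fun γ _ => Q.attach.image fun e => (e.1, γ e.1 e.2))
    (fun E hE => fun e he => (exlab E hE e he).choose) ?_ ?_ ?_ ?_ ?_
  · intro γ _
    rw [Finset.mem_filter]
    have hbase : ((Q.attach.image fun e => (e.1, γ e.1 e.2)).image Prod.fst) = Q := by
      rw [Finset.image_image]
      exact Finset.attach_image_val
    refine ⟨Finset.mem_filter.mpr ⟨Finset.mem_univ _, ?_, ?_⟩, hbase⟩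
    · rw [hbase]; exact hQ
    · intro p hp q hq hfst
      obtain ⟨e, _, rfl⟩ := Finset.mem_image.mp hp
      obtain ⟨e', _, rfl⟩ := Finset.mem_image.mp hq
      simp only at hfst
      have : e = e' := Subtype.ext hfst
      subst this
      rfl
  · intro E _
    rw [Finset.mem_pi]
    intro e _
    exact Finset.mem_univ _
  · intro γ hγ
    funext e he
    have hspec := (exlab _ (by
      -- membership of image in the filter; reprove quickly
      rw [Finset.mem_filter]
      have hbase : ((Q.attach.image fun e => (e.1, γ e.1 e.2)).image Prod.fst) = Q := by
        rw [Finset.image_image]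
        exact Finset.attach_image_val
      refine ⟨Finset.mem_filter.mpr ⟨Finset.mem_univ _, ?_, ?_⟩, hbase⟩
      · rw [hbase]; exact hQ
      · intro p hp q hq hfst
        obtain ⟨e', _, rfl⟩ := Finset.mem_image.mp hp
        obtain ⟨e'', _, rfl⟩ := Finset.mem_image.mp hq
        simp only at hfst
        have : e' = e'' := Subtype.ext hfst
        subst this
        rfl) e he).choose_spec
    obtain ⟨e', _, hpair⟩ := Finset.mem_image.mp hspec
    obtain ⟨hfst, hsnd⟩ := Prod.ext_iff.mp hpair
    simp only at hfst hsnd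
    subst hfst
    exact hsnd.symm
  · intro E hE
    have hLP : IsLabelledPartition V E := mem_lpartitionsOf.mp (Finset.mem_filter.mp hE).1
    have hbase := (Finset.mem_filter.mp hE).2
    ext q
    constructor
    · intro hq
      obtain ⟨e, _, rfl⟩ := Finset.mem_image.mp hq
      exact (exlab E hE e.1 e.2).choose_spec
    · intro hq
      have hq1 : q.1 ∈ Q := by
        rw [← hbase]
        exact Finset.mem_image_of_mem Prod.fst hq
      refine Finset.mem_image.mpr ⟨⟨q.1, hq1⟩, Finset.mem_attach _ _, ?_⟩
      have hspec := (exlab E hE q.1 hq1).choose_spec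
      exact hLP.2 _ hspec _ hq rfl
  · intro γ _
    rw [Finset.prod_image]
    · intro e _ e' _ hpair
      obtain ⟨hfst, _⟩ := Prod.ext_iff.mp hpair
      exact Subtype.ext hfst

end Helpers4
section Helpers5

set_option linter.unusedSectionVars false
set_option maxHeartbeats 1000000

noncomputable def margOf (A : Fin n → Type*) [∀ i, Fintype (A i)] {L : Type*}
    (μ : L → Cfg A Finset.univ → ℝ) (V : Finset (Fin n)) (x : Cfg A V)
    (e : Finset (Fin n)) (β : L) : ℝ :=
  marg A (Finset.subset_univ (e ∩ V)) (μ β)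
    (res A (Finset.inter_subset_right : e ∩ V ⊆ V) x)

variable (A : Fin n → Type*) [∀ i, Fintype (A i)]

lemma margOf_congr {L : Type*} (μ : L → Cfg A Finset.univ → ℝ) {V : Finset (Fin n)}
    (x : Cfg A V) {e e' : Finset (Fin n)} (h : e ∩ V = e' ∩ V) (β : L) :
    margOf A μ V x e β = margOf A μ V x e' β := by
  unfold margOf
  exact marg_congr A h (μ β) _ _ (fun i hi hi' => rfl)

lemma marg_MREstep {L : Type*} [Fintype L] (M : L → L → ℝ) (hM1 : ∀ α, ∑ β, M α β = 1)
    (r : Finset (Finset (Fin n)) → ℝ)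
    (μ : L → Cfg A Finset.univ → ℝ) (hmass : ∀ β, ∑ y, μ β y = 1)
    (V : Finset (Fin n)) (α : L) (x : Cfg A V) :
    marg A (Finset.subset_univ V) (MREstep A M r μ α) x
      = ∑ E ∈ lpartitionsOf L V, pUfact M r V E α *
          ∏ q ∈ E, margOf A μ V x q.1 q.2 := by
  classical
  -- Step A+B+C : marginal of one MRE step, blockwise
  have stepABC : marg A (Finset.subset_univ V) (MREstep A M r μ α) x
      = ∑ P ∈ partitionsOf (Finset.univ : Finset (Fin n)), r P *
          ∏ d ∈ P, ∑ β : L, M α β * margOf A μ V x d β := by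
    have hA : marg A (Finset.subset_univ V) (MREstep A M r μ α) x
        = ∑ P ∈ partitionsOf (Finset.univ : Finset (Fin n)), r P *
            marg A (Finset.subset_univ V)
              (fun y => ∏ d ∈ P, (fun z => ∑ β : L, M α β *
                  marg A (Finset.subset_univ d) (μ β) z) (res A (Finset.subset_univ d) y)) x :=
      marg_sum_comm A (Finset.subset_univ V) (partitionsOf (Finset.univ : Finset (Fin n))) r
        (fun P => fun y => ∏ d ∈ P, ∑ β : L, M α β *
          marg A (Finset.subset_univ d) (μ β) (res A (Finset.subset_univ d) y)) x
    rw [hA]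
    refine Finset.sum_congr rfl fun P hP => ?_
    congr 1
    rw [marg_prod A (mem_partitionsOf.mp hP)
      (fun d z => ∑ β : L, M α β * marg A (Finset.subset_univ d) (μ β) z) V x]
    refine Finset.prod_congr rfl fun d _ => ?_
    rw [marg_sum_comm A (Finset.inter_subset_left : d ∩ V ⊆ d) Finset.univ (M α)
      (fun β => marg A (Finset.subset_univ d) (μ β)) _]
    refine Finset.sum_congr rfl fun β _ => ?_
    rw [marg_marg A (Finset.subset_univ d) (Finset.inter_subset_left : d ∩ V ⊆ d) (μ β)]
    rfl
  rw [stepABC]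
  -- Step D+E : drop empty blocks and pass to the induced partition of V
  have stepDE : ∀ P ∈ partitionsOf (Finset.univ : Finset (Fin n)),
      (∏ d ∈ P, ∑ β : L, M α β * margOf A μ V x d β)
        = ∏ e ∈ restrictP P V, ∑ β : L, M α β * margOf A μ V x e β := by
    intro P hPmem
    have hP := mem_partitionsOf.mp hPmem
    rw [← Finset.prod_filter_mul_prod_filter_not P (fun d => (d ∩ V).Nonempty)]
    have hone : ∏ d ∈ P.filter (fun d => ¬(d ∩ V).Nonempty),
        (∑ β : L, M α β * margOf A μ V x d β) = 1 := by
      refine Finset.prod_eq_one fun d hd => ?_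
      have hdV : d ∩ V = ∅ := Finset.not_nonempty_iff_eq_empty.mp (Finset.mem_filter.mp hd).2
      have hmd : ∀ β, margOf A μ V x d β = 1 := by
        intro β
        unfold margOf
        have hcongr := marg_congr A hdV (μ β)
          (res A (Finset.inter_subset_right : d ∩ V ⊆ V) x)
          (fun i => absurd i.2 (Finset.notMem_empty i.1))
          (fun i hi hi' => absurd hi' (Finset.notMem_empty i))
        rw [hcongr, marg_empty_eq, hmass]
      simp only [hmd, mul_one]
      exact hM1 α
    rw [hone, mul_one, restrictP_eq_image]
    have hinj : ∀ d ∈ P.filter (fun d => (d ∩ V).Nonempty),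
        ∀ d' ∈ P.filter (fun d => (d ∩ V).Nonempty), d ∩ V = d' ∩ V → d = d' := by
      intro d hd d' hd' heq
      by_contra hne
      have hdisj := (hP.2.1 d (Finset.mem_filter.mp hd).1 d' (Finset.mem_filter.mp hd').1 hne).mono
        (Finset.inter_subset_left : d ∩ V ⊆ d) (Finset.inter_subset_left : d' ∩ V ⊆ d')
      rw [heq] at hdisj
      exact (Finset.mem_filter.mp hd').2.ne_empty (by simpa using disjoint_self.mp hdisj)
    rw [Finset.prod_image hinj]
    refine Finset.prod_congr rfl fun d _ => ?_
    refine Finset.sum_congr rfl fun β _ => ?_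
    exact congrArg (fun t => M α β * t)
      (margOf_congr A μ x (by rw [Finset.inter_assoc, Finset.inter_self]) β)
  rw [Finset.sum_congr rfl fun P hP => by rw [stepDE P hP]]
  -- Step F : expand the product over blocks of the induced partition into labellings
  have stepF : ∀ P ∈ partitionsOf (Finset.univ : Finset (Fin n)),
      (∏ e ∈ restrictP P V, ∑ β : L, M α β * margOf A μ V x e β)
        = ∑ E ∈ (lpartitionsOf L V).filter (fun E => E.image Prod.fst = restrictP P V),
            ∏ q ∈ E, (M α q.2 * margOf A μ V x q.1 q.2) := by
    intro P hPmem
    exact prod_sum_labelings (isPartition_restrictP (mem_partitionsOf.mp hPmem) V)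
      (fun e β => M α β * margOf A μ V x e β)
  rw [Finset.sum_congr rfl fun P hP => by rw [stepF P hP]]
  -- Step G : Fubini and identification with pUfact
  have stepG1 : ∀ P ∈ partitionsOf (Finset.univ : Finset (Fin n)),
      (r P * ∑ E ∈ (lpartitionsOf L V).filter (fun E => E.image Prod.fst = restrictP P V),
          ∏ q ∈ E, (M α q.2 * margOf A μ V x q.1 q.2))
        = ∑ E ∈ lpartitionsOf L V,
            (if restrictP P V = E.image Prod.fst
              then r P * ∏ q ∈ E, (M α q.2 * margOf A μ V x q.1 q.2) else 0) := by
    intro P _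
    rw [Finset.mul_sum, Finset.sum_filter]
    refine Finset.sum_congr rfl fun E _ => ?_
    by_cases h : E.image Prod.fst = restrictP P V
    · rw [if_pos h, if_pos h.symm]
    · rw [if_neg h, if_neg (fun h' => h h'.symm)]
  rw [Finset.sum_congr rfl fun P hP => stepG1 P hP, Finset.sum_comm]
  refine Finset.sum_congr rfl fun E hE => ?_
  rw [← Finset.sum_filter, ← Finset.sum_mul]
  simp only [pUfact]
  rw [Finset.prod_mul_distrib, mul_assoc]

end Helpers5
section Helpers6

set_option linter.unusedSectionVars false
set_option maxHeartbeats 1000000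

variable {L : Type*} [Fintype L]

-- In this section, `D` is a labelled partition of `univ` and `φ` chooses a labelled
-- partition of each block of `D`; `Ψ φ` is their union.

variable {D : Finset (Finset (Fin n) × L)}
  {φ : ∀ p : Finset (Fin n) × L, p ∈ D → Finset (Finset (Fin n) × L)}

lemma psi_mem {q : Finset (Fin n) × L} :
    q ∈ D.attach.biUnion (fun p => φ p.1 p.2) ↔ ∃ p : {x // x ∈ D}, q ∈ φ p.1 p.2 := by
  simp [Finset.mem_biUnion]

lemma psi_owner_unique (hD : IsLabelledPartition Finset.univ D)
    (hφ : ∀ p (hp : p ∈ D), IsLabelledPartition p.1 (φ p hp))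
    {q : Finset (Fin n) × L} {p p' : {x // x ∈ D}}
    (h1 : q ∈ φ p.1 p.2) (h2 : q ∈ φ p'.1 p'.2) : p = p' := by
  by_contra hne
  have hne' : p.1 ≠ p'.1 := fun h => hne (Subtype.ext h)
  have hd := lp_disjoint hD p.2 p'.2 hne'
  have hq1 : q.1 ⊆ p.1.1 := lp_block_subset (hφ p.1 p.2) h1
  have hq2 : q.1 ⊆ p'.1.1 := lp_block_subset (hφ p'.1 p'.2) h2
  obtain ⟨i, hi⟩ := lp_nonempty (hφ p.1 p.2) h1
  exact Finset.disjoint_left.mp hd (hq1 hi) (hq2 hi)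

lemma psi_isLP (hD : IsLabelledPartition Finset.univ D)
    (hφ : ∀ p (hp : p ∈ D), IsLabelledPartition p.1 (φ p hp)) :
    IsLabelledPartition Finset.univ (D.attach.biUnion (fun p => φ p.1 p.2)) := by
  constructor
  · refine ⟨?_, ?_, ?_⟩
    · intro b hb
      obtain ⟨q, hq, rfl⟩ := Finset.mem_image.mp hb
      obtain ⟨p, hqp⟩ := psi_mem.mp hq
      exact lp_nonempty (hφ p.1 p.2) hqp
    · intro b hb c hc hbc
      obtain ⟨q, hq, rfl⟩ := Finset.mem_image.mp hb
      obtain ⟨q', hq', rfl⟩ := Finset.mem_image.mp hc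
      obtain ⟨p, hqp⟩ := psi_mem.mp hq
      obtain ⟨p', hqp'⟩ := psi_mem.mp hq'
      by_cases hpp : p = p'
      · subst hpp
        exact (hφ p.1 p.2).1.2.1 q.1 (Finset.mem_image_of_mem _ hqp) q'.1
          (Finset.mem_image_of_mem _ hqp') hbc
      · have hne' : p.1 ≠ p'.1 := fun h => hpp (Subtype.ext h)
        exact (lp_disjoint hD p.2 p'.2 hne').mono
          (lp_block_subset (hφ p.1 p.2) hqp) (lp_block_subset (hφ p'.1 p'.2) hqp')
    · apply subset_antisymm
      · show ((D.attach.biUnion (fun p => φ p.1 p.2)).image Prod.fst).sup id ≤ Finset.univ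
        exact Finset.sup_le fun b _ => (show id b ≤ Finset.univ from Finset.subset_univ b)
      · intro i _
        obtain ⟨b, hb, hib⟩ := partition_cover hD.1 (Finset.mem_univ i)
        obtain ⟨p, hpD, rfl⟩ := Finset.mem_image.mp hb
        obtain ⟨e, he, hie⟩ := partition_cover (hφ p hpD).1 hib
        obtain ⟨q, hqφ, rfl⟩ := Finset.mem_image.mp he
        refine Finset.mem_sup.mpr ⟨q.1, ?_, hie⟩
        refine Finset.mem_image_of_mem Prod.fst (psi_mem.mpr ⟨⟨p, hpD⟩, hqφ⟩)
  · intro a ha b hb hab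
    obtain ⟨p, hap⟩ := psi_mem.mp ha
    obtain ⟨p', hbp⟩ := psi_mem.mp hb
    have hpp : p = p' := by
      by_contra hne
      have hne' : p.1 ≠ p'.1 := fun h => hne (Subtype.ext h)
      have hd := lp_disjoint hD p.2 p'.2 hne'
      obtain ⟨i, hi⟩ := lp_nonempty (hφ p.1 p.2) hap
      exact Finset.disjoint_left.mp hd (lp_block_subset (hφ p.1 p.2) hap hi)
        (lp_block_subset (hφ p'.1 p'.2) hbp (hab ▸ hi))
    subst hpp
    exact (hφ p.1 p.2).2 a hap b hbp hab

lemma psi_refines (hφ : ∀ p (hp : p ∈ D), IsLabelledPartition p.1 (φ p hp)) :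
    RefinesL (D.attach.biUnion (fun p => φ p.1 p.2)) D := by
  intro q hq
  obtain ⟨p, hqp⟩ := psi_mem.mp hq
  exact ⟨p.1, p.2, lp_block_subset (hφ p.1 p.2) hqp⟩

lemma psi_restrict (hD : IsLabelledPartition Finset.univ D)
    (hφ : ∀ p (hp : p ∈ D), IsLabelledPartition p.1 (φ p hp))
    {p : Finset (Fin n) × L} (hp : p ∈ D) :
    restrictL (D.attach.biUnion (fun p => φ p.1 p.2)) p.1 = φ p hp := by
  rw [refines_restrictL_eq_filter hD (psi_isLP hD hφ) (psi_refines hφ) hp]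
  ext q
  rw [Finset.mem_filter]
  constructor
  · rintro ⟨hq, hsub⟩
    obtain ⟨p', hqp'⟩ := psi_mem.mp hq
    have : p' = ⟨p, hp⟩ := by
      by_contra hne
      have hne' : p'.1 ≠ p := fun h => hne (Subtype.ext h)
      have hd := lp_disjoint hD p'.2 hp hne'
      obtain ⟨i, hi⟩ := lp_nonempty (hφ p'.1 p'.2) hqp'
      exact Finset.disjoint_left.mp hd (lp_block_subset (hφ p'.1 p'.2) hqp' hi) (hsub hi)
    subst this
    exact hqp'
  · intro hq
    exact ⟨psi_mem.mpr ⟨⟨p, hp⟩, hq⟩, lp_block_subset (hφ p hp) hq⟩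

lemma psi_prod (hD : IsLabelledPartition Finset.univ D)
    (hφ : ∀ p (hp : p ∈ D), IsLabelledPartition p.1 (φ p hp))
    (m : Finset (Fin n) × L → ℝ) :
    ∏ q ∈ D.attach.biUnion (fun p => φ p.1 p.2), m q
      = ∏ p ∈ D.attach, ∏ q ∈ φ p.1 p.2, m q := by
  refine Finset.prod_biUnion ?_
  intro p hp p' hp' hne
  show Disjoint (φ p.1 p.2) (φ p'.1 p'.2)
  rw [Finset.disjoint_left]
  intro q hq hq'
  exact hne (psi_owner_unique hD hφ hq hq')

lemma prod_refine {D : Finset (Finset (Fin n) × L)} (hD : IsLabelledPartition Finset.univ D)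
    (c : Finset (Fin n) × L → Finset (Finset (Fin n) × L) → ℝ)
    (m : Finset (Fin n) × L → ℝ) :
    ∏ p ∈ D, ∑ F ∈ lpartitionsOf L p.1, c p F * ∏ q ∈ F, m q
      = ∑ E ∈ (lpartitionsOf L Finset.univ).filter (fun E => RefinesL E D),
          (∏ p ∈ D, c p (restrictL E p.1)) * ∏ q ∈ E, m q := by
  classical
  rw [Finset.prod_sum]
  refine Finset.sum_bij' (fun φ _ => D.attach.biUnion (fun p => φ p.1 p.2))
    (fun E _ => fun p _ => restrictL E p.1) ?_ ?_ ?_ ?_ ?_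
  · intro φ hφmem
    have hφ : ∀ p (hp : p ∈ D), IsLabelledPartition p.1 (φ p hp) :=
      fun p hp => mem_lpartitionsOf.mp (Finset.mem_pi.mp hφmem p hp)
    exact Finset.mem_filter.mpr
      ⟨mem_lpartitionsOf.mpr (psi_isLP hD hφ), psi_refines hφ⟩
  · intro E hE
    have hELP : IsLabelledPartition Finset.univ E :=
      mem_lpartitionsOf.mp (Finset.mem_filter.mp hE).1
    rw [Finset.mem_pi]
    intro p hp
    exact mem_lpartitionsOf.mpr (isLabelledPartition_restrictL hELP p.1)
  · intro φ hφmem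
    have hφ : ∀ p (hp : p ∈ D), IsLabelledPartition p.1 (φ p hp) :=
      fun p hp => mem_lpartitionsOf.mp (Finset.mem_pi.mp hφmem p hp)
    funext p hp
    exact psi_restrict hD hφ hp
  · intro E hE
    have hELP : IsLabelledPartition Finset.univ E :=
      mem_lpartitionsOf.mp (Finset.mem_filter.mp hE).1
    have href : RefinesL E D := (Finset.mem_filter.mp hE).2
    ext q
    show q ∈ D.attach.biUnion (fun p => restrictL E p.1.1) ↔ q ∈ E
    constructor
    · intro hq
      obtain ⟨p, -, hq⟩ := Finset.mem_biUnion.mp hq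
      rw [refines_restrictL_eq_filter hD hELP href p.2] at hq
      exact (Finset.mem_filter.mp hq).1
    · intro hq
      obtain ⟨p, hp, hsub⟩ := href q hq
      refine Finset.mem_biUnion.mpr ⟨⟨p, hp⟩, Finset.mem_attach _ _, ?_⟩
      rw [refines_restrictL_eq_filter hD hELP href hp]
      exact Finset.mem_filter.mpr ⟨hq, hsub⟩
  · intro φ hφmem
    have hφ : ∀ p (hp : p ∈ D), IsLabelledPartition p.1 (φ p hp) :=
      fun p hp => mem_lpartitionsOf.mp (Finset.mem_pi.mp hφmem p hp)
    rw [Finset.prod_mul_distrib]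
    congr 1
    · rw [← Finset.prod_attach D
        (fun p => c p (restrictL (D.attach.biUnion (fun p => φ p.1 p.2)) p.1))]
      refine Finset.prod_congr rfl fun p _ => ?_
      rw [psi_restrict hD hφ p.2]
    · exact (psi_prod hD hφ m).symm

end Helpers6
section Helpers7

set_option linter.unusedSectionVars false
set_option maxHeartbeats 1000000

variable (A : Fin n → Type*) [∀ i, Fintype (A i)]

lemma recomb_norm {L : Type*} (D : Finset (Finset (Fin n) × L))
    (ν : L → Cfg A Finset.univ → ℝ) (x : Cfg A Finset.univ) :
    recomb A D ν x = ∏ p ∈ D, marg A (Finset.subset_univ p.1) (ν p.2)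
      (res A (Finset.subset_univ p.1) x) := by
  unfold recomb
  refine Finset.prod_congr rfl fun p _ => ?_
  exact marg_congr A (Finset.inter_univ p.1) (ν p.2) _ _ (fun i hi hi' => rfl)

lemma margOf_to_global {L : Type*} (μ : L → Cfg A Finset.univ → ℝ) {V : Finset (Fin n)}
    (x : Cfg A Finset.univ) {q : Finset (Fin n) × L} (hsub : q.1 ⊆ V) :
    margOf A μ V (res A (Finset.subset_univ V) x) q.1 q.2
      = marg A (Finset.subset_univ q.1) (μ q.2) (res A (Finset.subset_univ q.1) x) := by
  unfold margOf
  exact marg_congr A (Finset.inter_eq_left.mpr hsub) (μ q.2) _ _ (fun i hi hi' => rfl)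

end Helpers7
set_option maxHeartbeats 1000000 in
/-- if `(μ_t)` solves the MRE, then the vector `R(μ_t) = (R_𝛅(μ_t))_𝛅`
satisfies the linear recursion `R(μ_{t+1}) = T R(μ_t)`, and hence `R(μ_t) = T^t R(μ_0)`. -/
theorem recomb_linear_recursion (A : Fin n → Type*) [∀ i, Fintype (A i)]
    {L : Type*} [Fintype L] [DecidableEq L]
    (M : L → L → ℝ) (hM0 : ∀ α β, 0 ≤ M α β) (hM1 : ∀ α, ∑ β, M α β = 1)
    (r : Finset (Finset (Fin n)) → ℝ) (hr0 : ∀ P, 0 ≤ r P)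
    (hr1 : ∑ P ∈ partitionsOf (Finset.univ : Finset (Fin n)), r P = 1)
    (μ : ℕ → L → Cfg A Finset.univ → ℝ)
    (hμ0 : ∀ β, (∀ x, 0 ≤ μ 0 β x) ∧ ∑ x, μ 0 β x = 1)
    (hMRE : ∀ t α x, μ (t + 1) α x = MREstep A M r (μ t) α x) :
    (∀ t (D : LPfull n L) x, recomb A D.1 (μ (t + 1)) x =
        ∑ E : LPfull n L, TmatM M r D E * recomb A E.1 (μ t) x) ∧
      (∀ t (D : LPfull n L) x, recomb A D.1 (μ t) x =
        ∑ E : LPfull n L, (TmatM M r ^ t) D E * recomb A E.1 (μ 0) x) := by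
  classical
  have hmass : ∀ t β, ∑ y, μ t β y = 1 := by
    intro t
    induction t with
    | zero => exact fun β => (hμ0 β).2
    | succ t ih =>
      intro β
      have hfe : μ (t + 1) β = MREstep A M r (μ t) β := funext fun y => hMRE t β y
      rw [hfe]
      exact mass_MREstep A M hM1 r hr1 (μ t) ih β
  have hstep : ∀ t (D : LPfull n L) x, recomb A D.1 (μ (t + 1)) x =
      ∑ E : LPfull n L, TmatM M r D E * recomb A E.1 (μ t) x := by
    intro t D x
    have hD := D.2
    calc recomb A D.1 (μ (t + 1)) x
        = ∏ p ∈ D.1, marg A (Finset.subset_univ p.1) (μ (t + 1) p.2)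
            (res A (Finset.subset_univ p.1) x) := recomb_norm A D.1 (μ (t + 1)) x
      _ = ∏ p ∈ D.1, ∑ F ∈ lpartitionsOf L p.1,
            pUfact M r p.1 F p.2 * ∏ q ∈ F, marg A (Finset.subset_univ q.1) (μ t q.2)
              (res A (Finset.subset_univ q.1) x) := by
          refine Finset.prod_congr rfl fun p hp => ?_
          have hμeq : μ (t + 1) p.2 = MREstep A M r (μ t) p.2 := funext fun y => hMRE t p.2 y
          rw [hμeq, marg_MREstep A M hM1 r (μ t) (hmass t) p.1 p.2
            (res A (Finset.subset_univ p.1) x)]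
          refine Finset.sum_congr rfl fun F hF => ?_
          congr 1
          refine Finset.prod_congr rfl fun q hq => ?_
          exact margOf_to_global A (μ t) x (lp_block_subset (mem_lpartitionsOf.mp hF) hq)
      _ = ∑ E ∈ (lpartitionsOf L Finset.univ).filter (fun E => RefinesL E D.1),
            (∏ p ∈ D.1, pUfact M r p.1 (restrictL E p.1) p.2) *
              ∏ q ∈ E, marg A (Finset.subset_univ q.1) (μ t q.2)
                (res A (Finset.subset_univ q.1) x) :=
          prod_refine hD (fun p F => pUfact M r p.1 F p.2) _
      _ = ∑ E ∈ lpartitionsOf L Finset.univ, Tent M r D.1 E * recomb A E (μ t) x := by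
          rw [Finset.sum_filter]
          refine Finset.sum_congr rfl fun E hE => ?_
          unfold Tent
          by_cases h : RefinesL E D.1
          · rw [if_pos h, if_pos h, recomb_norm A E (μ t) x]
          · rw [if_neg h, if_neg h, zero_mul]
      _ = ∑ E : LPfull n L, TmatM M r D E * recomb A E.1 (μ t) x :=
          Finset.sum_subtype (lpartitionsOf L Finset.univ) (fun E => mem_lpartitionsOf)
            (fun E => Tent M r D.1 E * recomb A E (μ t) x)
  refine ⟨hstep, ?_⟩
  intro t
  induction t with
  | zero =>
    intro D x
    rw [pow_zero]
    symm
    simp [Matrix.one_apply, ite_mul, Finset.sum_ite_eq]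
  | succ t ih =>
    intro D x
    rw [hstep t D x]
    rw [Finset.sum_congr rfl fun E _ => by rw [ih E x]]
    simp only [Finset.mul_sum]
    rw [Finset.sum_comm]
    refine Finset.sum_congr rfl fun F _ => ?_
    rw [pow_succ', Matrix.mul_apply, Finset.sum_mul]
    refine Finset.sum_congr rfl fun E _ => ?_
    ring
end
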